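/- arXiv:2511.12826 — 5 statements merged into one kernel-verified Lean document; each statement's English description precedes it below -/
import Mathlib

section
/- Let N ∈ ℕ and let m¹₀, …, m¹_N, m²₀, …, m²_N ∈ ℝ be nonnegative and m³₋N, …, m³_N ∈ ℝ satisfy m³_i ≥ 0 for all i ≠ 0, with M ∈ ℝ^{(2N+2)×(2N+2)} the associated ReLU IQC matrix built from M₁, M₂, M₃. Then for every sequence v : ℕ → ℝ, with w(k) := max(v(k), 0) for all k, and r(k) the associated window vectors, the hard IQC ∑_{k=0}^{T₀} r(k)ᵀ M r(k) ≥ 0 holds for every T₀ ∈ ℕ. -/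
open Matrix

/-- Symmetric bordered matrix with `(m₀, …, m_N)` as both first row and first column,
and all other entries zero. -/
noncomputable def reluM12 (N : ℕ) (m : ℕ → ℝ) : Matrix (Fin (N + 1)) (Fin (N + 1)) ℝ :=
  Matrix.of fun i j =>
    if (i : ℕ) = 0 then m (j : ℕ)
    else if (j : ℕ) = 0 then m (i : ℕ) else 0

/-- The matrix `M₃` with first row `(m³₀, m³₁, …, m³_N)`, first column
`(m³₀, m³₋₁, …, m³₋N)ᵀ`, and all other entries zero. -/
noncomputable def reluM3 (N : ℕ) (m : ℤ → ℝ) : Matrix (Fin (N + 1)) (Fin (N + 1)) ℝ :=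
  Matrix.of fun i j =>
    if (i : ℕ) = 0 then m (j : ℤ)
    else if (j : ℕ) = 0 then m (-(i : ℤ)) else 0

/-- The ReLU IQC matrix
`M = [[M₁, −M₃ᵀ − M₁], [−M₃ − M₁, M₁ + M₂ + M₃ + M₃ᵀ]]`. -/
noncomputable def reluIQC (N : ℕ) (m1 m2 : ℕ → ℝ) (m3 : ℤ → ℝ) :
    Matrix (Fin (N + 1) ⊕ Fin (N + 1)) (Fin (N + 1) ⊕ Fin (N + 1)) ℝ :=
  Matrix.fromBlocks (reluM12 N m1) (-(reluM3 N m3)ᵀ - reluM12 N m1)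
    (-(reluM3 N m3) - reluM12 N m1)
    (reluM12 N m1 + reluM12 N m2 + reluM3 N m3 + (reluM3 N m3)ᵀ)

/-- Extension of a sequence on `ℕ` by zero to negative indices. -/
noncomputable def extZ (v : ℕ → ℝ) : ℤ → ℝ := fun j => if 0 ≤ j then v j.toNat else 0

/-- The window vector `r(k) = (v(k), …, v(k−N), w(k), …, w(k−N))`. -/
noncomputable def window (N : ℕ) (v w : ℕ → ℝ) (k : ℕ) :
    Fin (N + 1) ⊕ Fin (N + 1) → ℝ :=
  Sum.elim (fun i => extZ v ((k : ℤ) - (i : ℤ))) (fun i => extZ w ((k : ℤ) - (i : ℤ)))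

lemma dp_transpose {n : Type*} [Fintype n] (A : Matrix n n ℝ) (a b : n → ℝ) :
    a ⬝ᵥ Aᵀ *ᵥ b = b ⬝ᵥ A *ᵥ a := by
  rw [mulVec_transpose, dotProduct_comm, ← dotProduct_mulVec]

lemma reluM12_symm (N : ℕ) (m : ℕ → ℝ) : (reluM12 N m)ᵀ = reluM12 N m := by
  ext i j
  simp only [transpose_apply, reluM12, Matrix.of_apply]
  split_ifs with h1 h2 <;> simp_all

lemma aux12 (N : ℕ) (m : ℕ → ℝ) (z : Fin (N + 1) → ℝ)
    (hm : ∀ i : ℕ, i ≤ N → 0 ≤ m i) (hz : ∀ i j, 0 ≤ z i * z j) :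
    0 ≤ z ⬝ᵥ (reluM12 N m) *ᵥ z := by
  unfold reluM12 Matrix.mulVec dotProduct
  apply Finset.sum_nonneg
  intro i _
  rw [Finset.mul_sum]
  apply Finset.sum_nonneg
  intro j _
  simp only [Matrix.of_apply]
  split_ifs with h1 h2
  · rw [show z i * (m ↑j * z j) = m ↑j * (z i * z j) by ring]
    exact mul_nonneg (hm _ (Nat.lt_succ_iff.mp j.isLt)) (hz i j)
  · rw [show z i * (m ↑i * z j) = m ↑i * (z i * z j) by ring]
    exact mul_nonneg (hm _ (Nat.lt_succ_iff.mp i.isLt)) (hz i j)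
  · simp

lemma aux3 (N : ℕ) (m3 : ℤ → ℝ) (hm3 : ∀ i : ℤ, i ≠ 0 → |i| ≤ (N : ℤ) → 0 ≤ m3 i)
    (y u : Fin (N + 1) → ℝ) (hy : ∀ i, 0 ≤ y i) (hu : ∀ i, 0 ≤ u i)
    (h0 : y 0 * u 0 = 0) :
    0 ≤ y ⬝ᵥ (reluM3 N m3) *ᵥ u := by
  unfold reluM3 Matrix.mulVec dotProduct
  apply Finset.sum_nonneg
  intro i _
  rw [Finset.mul_sum]
  apply Finset.sum_nonneg
  intro j _
  simp only [Matrix.of_apply]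
  split_ifs with h1 h2
  · rcases eq_or_ne (j : ℕ) 0 with hj | hj
    · have hi0 : i = 0 := by ext; simpa using h1
      have hj0 : j = 0 := by ext; simpa using hj
      rw [hi0, hj0]
      rw [show y 0 * (m3 ↑↑(0 : Fin (N + 1)) * u 0)
            = m3 ↑↑(0 : Fin (N + 1)) * (y 0 * u 0) by ring, h0]
      simp
    · rw [show y i * (m3 ↑↑j * u j) = m3 ↑↑j * (y i * u j) by ring]
      apply mul_nonneg
      · apply hm3
        · exact_mod_cast hj
        · rw [abs_of_nonneg (by positivity)]
          exact_mod_cast Nat.lt_succ_iff.mp j.isLt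
      · exact mul_nonneg (hy i) (hu j)
  · rw [show y i * (m3 (-↑↑i) * u j) = m3 (-↑↑i) * (y i * u j) by ring]
    apply mul_nonneg
    · apply hm3
      · simpa using h1
      · rw [abs_neg, abs_of_nonneg (by positivity)]
        exact_mod_cast Nat.lt_succ_iff.mp i.isLt
    · exact mul_nonneg (hy i) (hu j)
  · simp

lemma qf_decomp (N : ℕ) (m1 m2 : ℕ → ℝ) (m3 : ℤ → ℝ) (x y : Fin (N + 1) → ℝ) :
    Sum.elim x y ⬝ᵥ (reluIQC N m1 m2 m3) *ᵥ Sum.elim x y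
      = (x - y) ⬝ᵥ (reluM12 N m1) *ᵥ (x - y) + y ⬝ᵥ (reluM12 N m2) *ᵥ y
        + 2 * (y ⬝ᵥ (reluM3 N m3) *ᵥ (y - x)) := by
  unfold reluIQC
  rw [fromBlocks_mulVec, sumElim_dotProduct_sumElim]
  have h1 : x ⬝ᵥ (reluM12 N m1) *ᵥ y = y ⬝ᵥ (reluM12 N m1) *ᵥ x := by
    conv_lhs => rw [← reluM12_symm N m1, dp_transpose]
  have h2 : x ⬝ᵥ (reluM3 N m3)ᵀ *ᵥ y = y ⬝ᵥ (reluM3 N m3) *ᵥ x := dp_transpose _ _ _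
  have h3 : y ⬝ᵥ (reluM3 N m3)ᵀ *ᵥ y = y ⬝ᵥ (reluM3 N m3) *ᵥ y := dp_transpose _ _ _
  simp only [sub_mulVec, add_mulVec, neg_mulVec, mulVec_sub, dotProduct_add, dotProduct_sub,
    dotProduct_neg, sub_dotProduct, Sum.elim_comp_inl, Sum.elim_comp_inr, h1, h2, h3]
  ring

theorem stmt10 (N : ℕ) (m1 m2 : ℕ → ℝ) (m3 : ℤ → ℝ)
    (hm1 : ∀ i : ℕ, i ≤ N → 0 ≤ m1 i) (hm2 : ∀ i : ℕ, i ≤ N → 0 ≤ m2 i)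
    (hm3 : ∀ i : ℤ, i ≠ 0 → |i| ≤ (N : ℤ) → 0 ≤ m3 i)
    (v w : ℕ → ℝ) (hw : ∀ k, w k = max (v k) 0) (T₀ : ℕ) :
    0 ≤ ∑ k ∈ Finset.range (T₀ + 1),
        window N v w k ⬝ᵥ (reluIQC N m1 m2 m3).mulVec (window N v w k) := by
  apply Finset.sum_nonneg
  intro k _
  set x : Fin (N + 1) → ℝ := fun i => extZ v ((k : ℤ) - (i : ℤ)) with hx
  set y : Fin (N + 1) → ℝ := fun i => extZ w ((k : ℤ) - (i : ℤ)) with hy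
  have hwin : window N v w k = Sum.elim x y := rfl
  rw [hwin, qf_decomp]
  have hy0 : ∀ i, 0 ≤ y i := by
    intro i
    simp only [hy, extZ]
    split_ifs with h
    · rw [hw]; exact le_max_right _ _
    · exact le_refl 0
  have hyx : ∀ i, 0 ≤ y i - x i := by
    intro i
    simp only [hx, hy, extZ]
    split_ifs with h
    · rw [hw]; exact sub_nonneg.2 (le_max_left _ _)
    · simp
  have hz1 : ∀ i j, 0 ≤ (x - y) i * (x - y) j := by
    intro i j
    have hi := hyx i
    have hj := hyx j
    simp only [Pi.sub_apply]
    nlinarith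
  have hz2 : ∀ i j, 0 ≤ y i * y j := fun i j => mul_nonneg (hy0 i) (hy0 j)
  have h0 : y 0 * (y - x) 0 = 0 := by
    simp only [hx, hy, Pi.sub_apply, extZ]
    have : ((0 : Fin (N + 1)) : ℤ) = 0 := rfl
    have hk : (0 : ℤ) ≤ (k : ℤ) := Int.natCast_nonneg k
    simp only [this, sub_zero, hk, if_true, Int.toNat_natCast, hw]
    rcases le_total (v k) 0 with h | h
    · rw [max_eq_right h]; ring
    · rw [max_eq_left h]; ring
  have hu : ∀ i, 0 ≤ (y - x) i := fun i => hyx i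
  apply add_nonneg (add_nonneg (aux12 N m1 _ hm1 hz1) (aux12 N m2 _ hm2 hz2))
  exact mul_nonneg (by norm_num) (aux3 N m3 hm3 y (y - x) hy0 hu h0)
end

section
/- Let N ∈ ℕ and m₋N, …, m_N ∈ ℝ satisfy m_i ≤ 0 for all i ≠ 0 and ∑_{i=−N}^{N} m_i ≥ 0. Define m¹_i := 0 and m²_i := 0 for i = 0, …, N, and m³_i := −m_i for i = −N, …, N. Then m¹_i ≥ 0 and m²_i ≥ 0 for all i, m³_i ≥ 0 for all i ≠ 0, and the ReLU IQC matrix associated with (m¹, m², m³) equals the Zames–Falb IQC matrix associated with (m₋N, …, m_N); that is, every Zames–Falb IQC matrix for [0,1] slope-restricted nonlinearities belongs to the class of ReLU IQC matrices. -/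
open Matrix

/-- The matrix `M₀` with first row `(m₀, m₁, …, m_N)`, first column `(m₀, m₋₁, …, m₋N)ᵀ`,
and all other entries zero. -/
noncomputable def zfM0 (N : ℕ) (m : ℤ → ℝ) : Matrix (Fin (N + 1)) (Fin (N + 1)) ℝ :=
  Matrix.of fun i j =>
    if (i : ℕ) = 0 then m (j : ℤ)
    else if (j : ℕ) = 0 then m (-(i : ℤ)) else 0

/-- The Zames–Falb IQC matrix `M = [[0, M₀ᵀ], [M₀, −(M₀ + M₀ᵀ)]]`. -/
noncomputable def zfIQC (N : ℕ) (m : ℤ → ℝ) :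
    Matrix (Fin (N + 1) ⊕ Fin (N + 1)) (Fin (N + 1) ⊕ Fin (N + 1)) ℝ :=
  Matrix.fromBlocks 0 (zfM0 N m)ᵀ (zfM0 N m) (-(zfM0 N m + (zfM0 N m)ᵀ))

theorem stmt11 (N : ℕ) (m : ℤ → ℝ)
    (hm : ∀ i : ℤ, i ≠ 0 → |i| ≤ (N : ℤ) → m i ≤ 0)
    (hsum : 0 ≤ ∑ i ∈ Finset.Icc (-(N : ℤ)) (N : ℤ), m i)
    (m1 m2 : ℕ → ℝ) (m3 : ℤ → ℝ)
    (hm1 : ∀ i : ℕ, m1 i = 0) (hm2 : ∀ i : ℕ, m2 i = 0)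
    (hm3 : ∀ i : ℤ, m3 i = -m i) :
    (∀ i : ℕ, 0 ≤ m1 i) ∧ (∀ i : ℕ, 0 ≤ m2 i) ∧
      (∀ i : ℤ, i ≠ 0 → |i| ≤ (N : ℤ) → 0 ≤ m3 i) ∧
      reluIQC N m1 m2 m3 = zfIQC N m := by
  refine ⟨fun i => by rw [hm1 i], fun i => by rw [hm2 i],
    fun i hi hiN => by rw [hm3 i]; linarith [hm i hi hiN], ?_⟩
  ext (i | i) (j | j) <;>
    simp [reluIQC, zfIQC, Matrix.fromBlocks, reluM12, reluM3, zfM0, hm1, hm2, hm3,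
      Matrix.transpose_apply] <;>
    split_ifs <;> ring
end

section
/- Let n_x ∈ ℕ, A ∈ ℝ^{n_x×n_x}, B ∈ ℝ^{n_x}, C ∈ ℝ^{1×n_x}, D ∈ ℝ. Let N ≥ 1 and let m¹₀, …, m¹_N, m²₀, …, m²_N ∈ ℝ be nonnegative and m³₋N, …, m³_N ∈ ℝ satisfy m³_i ≥ 0 for all i ≠ 0, with M ∈ ℝ^{(2N+2)×(2N+2)} the associated ReLU IQC matrix. Suppose there exists a symmetric positive semidefinite P ∈ ℝ^{(n_x+2N)×(n_x+2N)} such that for every ξ = (ξ_x, ξ_v, ξ_w) ∈ ℝ^{n_x} × ℝ^{N} × ℝ^{N} and ω ∈ ℝ with (ξ, ω) ≠ 0, defining ξ⁺ := (A ξ_x + B ω, (C ξ_x + D ω, ξ_{v,1}, …, ξ_{v,N−1}), (ω, ξ_{w,1}, …, ξ_{w,N−1})) ∈ ℝ^{n_x+2N} and ρ := (C ξ_x + D ω, ξ_{v,1}, …, ξ_{v,N}, ω, ξ_{w,1}, …, ξ_{w,N}) ∈ ℝ^{2N+2}, one has (ξ⁺)ᵀ P ξ⁺ − ξᵀ P ξ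 + ρᵀ M ρ < 0. Then for all sequences x : ℕ → ℝ^{n_x} and v, w : ℕ → ℝ satisfying x(k+1) = A x(k) + B w(k), v(k) = C x(k) + D w(k), and w(k) = max(v(k), 0) for all k ∈ ℕ, it holds that x(k) → 0 as k → ∞. -/
open Matrix

/-- Shift register update: push the value `a` in front and drop the last entry. -/
def shiftIn {N : ℕ} (a : ℝ) (ξ : Fin N → ℝ) : Fin N → ℝ :=
  fun i => if h : (i : ℕ) = 0 then a
    else ξ ⟨(i : ℕ) - 1, by have := i.isLt; omega⟩

/-- Prepend a value to a vector of length `N`, giving a vector of length `N+1`. -/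
def headAppend {N : ℕ} (a : ℝ) (ξ : Fin N → ℝ) : Fin (N + 1) → ℝ :=
  fun i => if h : (i : ℕ) = 0 then a
    else ξ ⟨(i : ℕ) - 1, by have := i.isLt; omega⟩

/-- Stack `(ξ_x, ξ_v, ξ_w)` into a single vector in `ℝ^{n_x + 2N}`. -/
def stk {nx N : ℕ} (ξx : Fin nx → ℝ) (ξv ξw : Fin N → ℝ) :
    Fin nx ⊕ (Fin N ⊕ Fin N) → ℝ :=
  Sum.elim ξx (Sum.elim ξv ξw)

lemma m12_quad {N : ℕ} (m : ℕ → ℝ) (a b : Fin (N+1) → ℝ) :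
    a ⬝ᵥ (reluM12 N m) *ᵥ b
      = a 0 * (∑ j : Fin (N+1), m (j : ℕ) * b j)
        + b 0 * (∑ i : Fin N, m ((i : ℕ)+1) * a i.succ) := by
  simp only [dotProduct, mulVec, reluM12, Matrix.of_apply]
  rw [Fin.sum_univ_succ]
  have h1 : ∀ i : Fin N, (∑ j : Fin (N+1), (if ((i.succ : Fin (N+1)) : ℕ) = 0 then m (j:ℕ) else if (j : ℕ) = 0 then m ((i.succ : Fin (N+1)) : ℕ) else 0) * b j) = m ((i:ℕ)+1) * b 0 := by
    intro i
    rw [Fin.sum_univ_succ]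
    simp [Fin.val_succ]
  simp only [h1, Fin.val_zero, if_pos]
  congr 1
  rw [Finset.mul_sum]
  exact Finset.sum_congr rfl fun i _ => by ring

lemma m3_quad {N : ℕ} (m : ℤ → ℝ) (a b : Fin (N+1) → ℝ) :
    a ⬝ᵥ (reluM3 N m) *ᵥ b
      = a 0 * (∑ j : Fin (N+1), m ((j : ℕ) : ℤ) * b j)
        + b 0 * (∑ i : Fin N, m (-(((i : ℕ) : ℤ)+1)) * a i.succ) := by
  simp only [dotProduct, mulVec, reluM3, Matrix.of_apply]
  rw [Fin.sum_univ_succ]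
  have h1 : ∀ i : Fin N, (∑ j : Fin (N+1), (if ((i.succ : Fin (N+1)) : ℕ) = 0 then m ((j:ℕ):ℤ) else if (j : ℕ) = 0 then m (-(((i.succ : Fin (N+1)) : ℕ) : ℤ)) else 0) * b j) = m (-(((i : ℕ) : ℤ)+1)) * b 0 := by
    intro i
    rw [Fin.sum_univ_succ]
    simp [Fin.val_succ]
  simp only [h1, Fin.val_zero, if_pos]
  congr 1
  rw [Finset.mul_sum]
  exact Finset.sum_congr rfl fun i _ => by ring

lemma dot_transpose {ι : Type*} [Fintype ι] (M : Matrix ι ι ℝ) (a b : ι → ℝ) :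
    a ⬝ᵥ Mᵀ *ᵥ b = b ⬝ᵥ M *ᵥ a := by
  rw [Matrix.dotProduct_mulVec, Matrix.vecMul_transpose, dotProduct_comm]

lemma iqc_key {N : ℕ} (m1 m2 : ℕ → ℝ) (m3 : ℤ → ℝ) (V W : Fin (N+1) → ℝ) :
    Sum.elim V W ⬝ᵥ (reluIQC N m1 m2 m3) *ᵥ Sum.elim V W
      = (W - V) ⬝ᵥ (reluM12 N m1) *ᵥ (W - V) + W ⬝ᵥ (reluM12 N m2) *ᵥ W
        + 2 * (W ⬝ᵥ (reluM3 N m3) *ᵥ (W - V)) := by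
  rw [reluIQC, Matrix.fromBlocks_mulVec, sumElim_dotProduct_sumElim]
  simp only [Matrix.add_mulVec, Matrix.sub_mulVec, Matrix.neg_mulVec, Matrix.mulVec_sub,
    dotProduct_add, dotProduct_sub, dotProduct_neg, sub_dotProduct,
    neg_dotProduct, dot_transpose, Sum.elim_comp_inl, Sum.elim_comp_inr]
  ring

lemma iqc_nonneg {N : ℕ} (m1 m2 : ℕ → ℝ) (m3 : ℤ → ℝ)
    (hm1 : ∀ i : ℕ, i ≤ N → 0 ≤ m1 i) (hm2 : ∀ i : ℕ, i ≤ N → 0 ≤ m2 i)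
    (hm3 : ∀ i : ℤ, i ≠ 0 → |i| ≤ (N : ℤ) → 0 ≤ m3 i)
    (V W : Fin (N+1) → ℝ) (hW : ∀ i, W i = max (V i) 0) :
    0 ≤ Sum.elim V W ⬝ᵥ (reluIQC N m1 m2 m3) *ᵥ Sum.elim V W := by
  have hu0 : ∀ i, 0 ≤ (W - V) i := fun i => by
    simp only [Pi.sub_apply, hW i, sub_nonneg]; exact le_max_left _ _
  have hW0 : ∀ i, 0 ≤ W i := fun i => by rw [hW i]; exact le_max_right _ _
  have hcomp : W 0 * (W - V) 0 = 0 := by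
    rcases le_or_gt (V 0) 0 with h | h
    · simp [hW 0, max_eq_right h]
    · simp [hW 0, max_eq_left h.le]
  have hb1 : ∀ j : Fin (N+1), (j : ℕ) ≤ N := fun j => Nat.lt_succ_iff.mp j.isLt
  have hb2 : ∀ i : Fin N, (i : ℕ) + 1 ≤ N := fun i => i.isLt
  rw [iqc_key]
  have h1 : 0 ≤ (W - V) ⬝ᵥ (reluM12 N m1) *ᵥ (W - V) := by
    rw [m12_quad]
    refine add_nonneg (mul_nonneg (hu0 0) (Finset.sum_nonneg fun j _ =>
        mul_nonneg (hm1 _ (hb1 j)) (hu0 j)))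
      (mul_nonneg (hu0 0) (Finset.sum_nonneg fun i _ =>
        mul_nonneg (hm1 _ (hb2 i)) (hu0 _)))
  have h2 : 0 ≤ W ⬝ᵥ (reluM12 N m2) *ᵥ W := by
    rw [m12_quad]
    refine add_nonneg (mul_nonneg (hW0 0) (Finset.sum_nonneg fun j _ =>
        mul_nonneg (hm2 _ (hb1 j)) (hW0 j)))
      (mul_nonneg (hW0 0) (Finset.sum_nonneg fun i _ =>
        mul_nonneg (hm2 _ (hb2 i)) (hW0 _)))
  have h3 : 0 ≤ W ⬝ᵥ (reluM3 N m3) *ᵥ (W - V) := by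
    rw [m3_quad]
    have hsplit : (∑ j : Fin (N+1), m3 ((j : ℕ) : ℤ) * (W - V) j)
        = m3 0 * (W - V) 0 + ∑ j : Fin N, m3 (((j : ℕ) : ℤ) + 1) * (W - V) j.succ := by
      rw [Fin.sum_univ_succ]
      simp [Fin.val_succ]
    rw [hsplit, mul_add, ← mul_assoc, mul_comm (W 0) (m3 0), mul_assoc, hcomp, mul_zero, zero_add]
    refine add_nonneg (mul_nonneg (hW0 0) (Finset.sum_nonneg fun j _ => mul_nonneg
        (hm3 _ (by positivity) (by rw [abs_of_nonneg (by positivity)]; have := hb2 j; omega)) (hu0 _)))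
      (mul_nonneg (hu0 0) (Finset.sum_nonneg fun i _ => mul_nonneg
        (hm3 _ (by omega) (by have := hb2 i; rw [abs_neg]; rw [abs_of_nonneg (by positivity)]; omega)) (hW0 _)))
  linarith

noncomputable def bigQ (nx N : ℕ) (A : Matrix (Fin nx) (Fin nx) ℝ) (B C : Fin nx → ℝ) (D : ℝ)
    (m1 m2 : ℕ → ℝ) (m3 : ℤ → ℝ)
    (P : Matrix (Fin nx ⊕ (Fin N ⊕ Fin N)) (Fin nx ⊕ (Fin N ⊕ Fin N)) ℝ)
    (p : ((Fin nx ⊕ (Fin N ⊕ Fin N)) → ℝ) × ℝ) : ℝ :=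
  stk (A.mulVec (fun i => p.1 (Sum.inl i)) + p.2 • B)
      (shiftIn (C ⬝ᵥ (fun i => p.1 (Sum.inl i)) + D * p.2) (fun i => p.1 (Sum.inr (Sum.inl i))))
      (shiftIn p.2 (fun i => p.1 (Sum.inr (Sum.inr i)))) ⬝ᵥ
    P.mulVec (stk (A.mulVec (fun i => p.1 (Sum.inl i)) + p.2 • B)
      (shiftIn (C ⬝ᵥ (fun i => p.1 (Sum.inl i)) + D * p.2) (fun i => p.1 (Sum.inr (Sum.inl i))))
      (shiftIn p.2 (fun i => p.1 (Sum.inr (Sum.inr i)))))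
  - p.1 ⬝ᵥ P.mulVec p.1
  + (Sum.elim (headAppend (C ⬝ᵥ (fun i => p.1 (Sum.inl i)) + D * p.2) (fun i => p.1 (Sum.inr (Sum.inl i))))
      (headAppend p.2 (fun i => p.1 (Sum.inr (Sum.inr i))))) ⬝ᵥ
      (reluIQC N m1 m2 m3).mulVec
        (Sum.elim (headAppend (C ⬝ᵥ (fun i => p.1 (Sum.inl i)) + D * p.2) (fun i => p.1 (Sum.inr (Sum.inl i))))
          (headAppend p.2 (fun i => p.1 (Sum.inr (Sum.inr i)))))

lemma stk_comp {nx N : ℕ} (ξ : Fin nx ⊕ (Fin N ⊕ Fin N) → ℝ) :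
    stk (fun i => ξ (Sum.inl i)) (fun i => ξ (Sum.inr (Sum.inl i)))
      (fun i => ξ (Sum.inr (Sum.inr i))) = ξ := by
  funext i; rcases i with i | (i | i) <;> rfl

lemma shiftIn_smul {N : ℕ} (c a : ℝ) (ξ : Fin N → ℝ) :
    shiftIn (c * a) (c • ξ) = c • shiftIn a ξ := by
  funext i
  simp only [shiftIn, Pi.smul_apply, smul_eq_mul]
  split <;> simp

lemma headAppend_smul {N : ℕ} (c a : ℝ) (ξ : Fin N → ℝ) :
    headAppend (c * a) (c • ξ) = c • headAppend a ξ := by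
  funext i
  simp only [headAppend, Pi.smul_apply, smul_eq_mul]
  split <;> simp

lemma quad_smul {ι : Type*} [Fintype ι] (M : Matrix ι ι ℝ) (c : ℝ) (z : ι → ℝ) :
    (c • z) ⬝ᵥ M *ᵥ (c • z) = c ^ 2 * (z ⬝ᵥ M *ᵥ z) := by
  rw [Matrix.mulVec_smul, dotProduct_smul, smul_dotProduct,
    smul_eq_mul, smul_eq_mul]
  ring

lemma bigQ_smul (nx N : ℕ) (A : Matrix (Fin nx) (Fin nx) ℝ) (B C : Fin nx → ℝ) (D : ℝ)
    (m1 m2 : ℕ → ℝ) (m3 : ℤ → ℝ)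
    (P : Matrix (Fin nx ⊕ (Fin N ⊕ Fin N)) (Fin nx ⊕ (Fin N ⊕ Fin N)) ℝ)
    (c : ℝ) (p : ((Fin nx ⊕ (Fin N ⊕ Fin N)) → ℝ) × ℝ) :
    bigQ nx N A B C D m1 m2 m3 P (c • p) = c ^ 2 * bigQ nx N A B C D m1 m2 m3 P p := by
  obtain ⟨ξ, ω⟩ := p
  unfold bigQ
  simp only [Prod.smul_fst, Prod.smul_snd, smul_eq_mul]
  have e1 : (fun i => (c • ξ) (Sum.inl i)) = c • fun i => ξ (Sum.inl i) := rfl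
  have e2 : (fun i => (c • ξ) (Sum.inr (Sum.inl i))) = c • fun i => ξ (Sum.inr (Sum.inl i)) := rfl
  have e3 : (fun i => (c • ξ) (Sum.inr (Sum.inr i))) = c • fun i => ξ (Sum.inr (Sum.inr i)) := rfl
  rw [e1, e2, e3]
  have hv : C ⬝ᵥ (c • fun i => ξ (Sum.inl i)) + D * (c * ω)
      = c * (C ⬝ᵥ (fun i => ξ (Sum.inl i)) + D * ω) := by
    rw [dotProduct_smul, smul_eq_mul]; ring
  have hx : A.mulVec (c • fun i => ξ (Sum.inl i)) + (c * ω) • B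
      = c • (A.mulVec (fun i => ξ (Sum.inl i)) + ω • B) := by
    rw [Matrix.mulVec_smul, smul_add, mul_smul]
  have hstk : ∀ (a : Fin nx → ℝ) (b d : Fin N → ℝ),
      stk (c • a) (c • b) (c • d) = c • stk a b d := by
    intro a b d; funext i; rcases i with i | (i | i) <;> rfl
  have helim : ∀ (a b : Fin (N+1) → ℝ),
      Sum.elim (c • a) (c • b) = c • Sum.elim a b := by
    intro a b; funext i; rcases i with i | i <;> rfl
  rw [hv, hx, shiftIn_smul, shiftIn_smul, headAppend_smul, headAppend_smul, hstk, helim,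
    quad_smul, quad_smul, quad_smul]
  ring

section Cont
variable {X : Type*} [TopologicalSpace X]

lemma continuous_dotmul {ι : Type*} [Fintype ι]
    (M : Matrix ι ι ℝ) {f g : X → ι → ℝ} (hf : ∀ i, Continuous fun x => f x i)
    (hg : ∀ i, Continuous fun x => g x i) :
    Continuous fun x => f x ⬝ᵥ M *ᵥ g x := by
  simp only [dotProduct, Matrix.mulVec]
  exact continuous_finset_sum _ fun i _ =>
    (hf i).mul (continuous_finset_sum _ fun j _ => continuous_const.mul (hg j))

lemma continuous_dotvec {ι : Type*} [Fintype ι]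
    (c : ι → ℝ) {f : X → ι → ℝ} (hf : ∀ i, Continuous fun x => f x i) :
    Continuous fun x => c ⬝ᵥ f x := by
  simp only [dotProduct]
  exact continuous_finset_sum _ fun i _ => continuous_const.mul (hf i)

lemma continuous_shiftIn {N : ℕ} {a : X → ℝ} {ξ : X → Fin N → ℝ}
    (ha : Continuous a) (hξ : ∀ i, Continuous fun x => ξ x i) (i : Fin N) :
    Continuous fun x => shiftIn (a x) (ξ x) i := by
  unfold shiftIn
  by_cases h : (i : ℕ) = 0
  · simpa [h] using ha
  · simpa [h] using hξ _

lemma continuous_headAppend {N : ℕ} {a : X → ℝ} {ξ : X → Fin N → ℝ}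
    (ha : Continuous a) (hξ : ∀ i, Continuous fun x => ξ x i) (i : Fin (N+1)) :
    Continuous fun x => headAppend (a x) (ξ x) i := by
  unfold headAppend
  by_cases h : (i : ℕ) = 0
  · simpa [h] using ha
  · simpa [h] using hξ _

end Cont

lemma bigQ_continuous (nx N : ℕ) (A : Matrix (Fin nx) (Fin nx) ℝ) (B C : Fin nx → ℝ) (D : ℝ)
    (m1 m2 : ℕ → ℝ) (m3 : ℤ → ℝ)
    (P : Matrix (Fin nx ⊕ (Fin N ⊕ Fin N)) (Fin nx ⊕ (Fin N ⊕ Fin N)) ℝ) :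
    Continuous (bigQ nx N A B C D m1 m2 m3 P) := by
  have hx : ∀ i : Fin nx, Continuous
      fun p : ((Fin nx ⊕ (Fin N ⊕ Fin N)) → ℝ) × ℝ => p.1 (Sum.inl i) :=
    fun i => (continuous_apply (Sum.inl i)).comp continuous_fst
  have hv : ∀ i : Fin N, Continuous
      fun p : ((Fin nx ⊕ (Fin N ⊕ Fin N)) → ℝ) × ℝ => p.1 (Sum.inr (Sum.inl i)) :=
    fun i => (continuous_apply (Sum.inr (Sum.inl i))).comp continuous_fst
  have hw : ∀ i : Fin N, Continuous
      fun p : ((Fin nx ⊕ (Fin N ⊕ Fin N)) → ℝ) × ℝ => p.1 (Sum.inr (Sum.inr i)) :=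
    fun i => (continuous_apply (Sum.inr (Sum.inr i))).comp continuous_fst
  have hall : ∀ i, Continuous
      fun p : ((Fin nx ⊕ (Fin N ⊕ Fin N)) → ℝ) × ℝ => p.1 i :=
    fun i => (continuous_apply i).comp continuous_fst
  have hom : Continuous fun p : ((Fin nx ⊕ (Fin N ⊕ Fin N)) → ℝ) × ℝ => p.2 := continuous_snd
  have hvout : Continuous fun p : ((Fin nx ⊕ (Fin N ⊕ Fin N)) → ℝ) × ℝ =>
      C ⬝ᵥ (fun i => p.1 (Sum.inl i)) + D * p.2 :=
    (continuous_dotvec C hx).add (continuous_const.mul hom)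
  have hxplus : ∀ i : Fin nx, Continuous fun p : ((Fin nx ⊕ (Fin N ⊕ Fin N)) → ℝ) × ℝ =>
      (A.mulVec (fun i => p.1 (Sum.inl i)) + p.2 • B) i := by
    intro i
    simp only [Pi.add_apply, Pi.smul_apply, smul_eq_mul, Matrix.mulVec, dotProduct]
    exact (continuous_finset_sum _ fun j _ => continuous_const.mul (hx j)).add
      (hom.mul continuous_const)
  have hstk1 : ∀ i, Continuous fun p : ((Fin nx ⊕ (Fin N ⊕ Fin N)) → ℝ) × ℝ =>
      stk (A.mulVec (fun i => p.1 (Sum.inl i)) + p.2 • B)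
        (shiftIn (C ⬝ᵥ (fun i => p.1 (Sum.inl i)) + D * p.2) (fun i => p.1 (Sum.inr (Sum.inl i))))
        (shiftIn p.2 (fun i => p.1 (Sum.inr (Sum.inr i)))) i := by
    intro i
    rcases i with i | (i | i)
    · exact hxplus i
    · exact continuous_shiftIn hvout hv i
    · exact continuous_shiftIn hom hw i
  have hrho : ∀ i, Continuous fun p : ((Fin nx ⊕ (Fin N ⊕ Fin N)) → ℝ) × ℝ =>
      (Sum.elim
        (headAppend (C ⬝ᵥ (fun i => p.1 (Sum.inl i)) + D * p.2) (fun i => p.1 (Sum.inr (Sum.inl i))))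
        (headAppend p.2 (fun i => p.1 (Sum.inr (Sum.inr i))))) i := by
    intro i
    rcases i with i | i
    · exact continuous_headAppend hvout hv i
    · exact continuous_headAppend hom hw i
  unfold bigQ
  exact ((continuous_dotmul P hstk1 hstk1).sub (continuous_dotmul P hall hall)).add
    (continuous_dotmul _ hrho hrho)

lemma shift_reg {N : ℕ} (y : ℕ → ℝ) (k : ℕ) :
    (fun i : Fin N => y (k + 1 - 1 - (i : ℕ)))
      = shiftIn (y k) (fun i : Fin N => y (k - 1 - (i : ℕ))) := by
  funext i; unfold shiftIn
  by_cases h : (i : ℕ) = 0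
  · rw [dif_pos h]; congr 1; omega
  · rw [dif_neg h]; simp only [Fin.val_mk]; congr 1; omega

lemma head_reg {N : ℕ} (y : ℕ → ℝ) (k : ℕ) :
    headAppend (y k) (fun i : Fin N => y (k - 1 - (i : ℕ)))
      = fun i : Fin (N+1) => y (k - (i : ℕ)) := by
  funext i; unfold headAppend
  by_cases h : (i : ℕ) = 0
  · rw [dif_pos h]; congr 1; omega
  · rw [dif_neg h]; simp only [Fin.val_mk]; congr 1; omega

theorem stmt12 (nx : ℕ) (A : Matrix (Fin nx) (Fin nx) ℝ) (B : Fin nx → ℝ)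
    (C : Fin nx → ℝ) (D : ℝ)
    (N : ℕ) (hN : 1 ≤ N)
    (m1 m2 : ℕ → ℝ) (m3 : ℤ → ℝ)
    (hm1 : ∀ i : ℕ, i ≤ N → 0 ≤ m1 i) (hm2 : ∀ i : ℕ, i ≤ N → 0 ≤ m2 i)
    (hm3 : ∀ i : ℤ, i ≠ 0 → |i| ≤ (N : ℤ) → 0 ≤ m3 i)
    (P : Matrix (Fin nx ⊕ (Fin N ⊕ Fin N)) (Fin nx ⊕ (Fin N ⊕ Fin N)) ℝ)
    (hP : P.PosSemidef)
    (hLMI : ∀ (ξx : Fin nx → ℝ) (ξv ξw : Fin N → ℝ) (ω : ℝ),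
      ¬(ξx = 0 ∧ ξv = 0 ∧ ξw = 0 ∧ ω = 0) →
      stk (A.mulVec ξx + ω • B) (shiftIn (C ⬝ᵥ ξx + D * ω) ξv) (shiftIn ω ξw) ⬝ᵥ
          P.mulVec
            (stk (A.mulVec ξx + ω • B) (shiftIn (C ⬝ᵥ ξx + D * ω) ξv) (shiftIn ω ξw))
        - stk ξx ξv ξw ⬝ᵥ P.mulVec (stk ξx ξv ξw)
        + (Sum.elim (headAppend (C ⬝ᵥ ξx + D * ω) ξv) (headAppend ω ξw)) ⬝ᵥ
            (reluIQC N m1 m2 m3).mulVec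
              (Sum.elim (headAppend (C ⬝ᵥ ξx + D * ω) ξv) (headAppend ω ξw))
        < 0)
    (x : ℕ → Fin nx → ℝ) (v w : ℕ → ℝ)
    (hdyn : ∀ k, x (k + 1) = A.mulVec (x k) + w k • B)
    (hout : ∀ k, v k = C ⬝ᵥ x k + D * w k)
    (hrelu : ∀ k, w k = max (v k) 0) :
    Filter.Tendsto x Filter.atTop (nhds 0) := by
  classical
  set Q : ((Fin nx ⊕ (Fin N ⊕ Fin N)) → ℝ) × ℝ → ℝ := bigQ nx N A B C D m1 m2 m3 P with hQdef
  have hQneg : ∀ p : ((Fin nx ⊕ (Fin N ⊕ Fin N)) → ℝ) × ℝ, p ≠ 0 → Q p < 0 := by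
    intro p hp
    have hne : ¬((fun i => p.1 (Sum.inl i)) = 0 ∧ (fun i => p.1 (Sum.inr (Sum.inl i))) = 0
        ∧ (fun i => p.1 (Sum.inr (Sum.inr i))) = 0 ∧ p.2 = 0) := by
      rintro ⟨h1, h2, h3, h4⟩
      apply hp
      have h5 : p.1 = 0 := by
        funext i
        rcases i with i | (i | i)
        · exact congrFun h1 i
        · exact congrFun h2 i
        · exact congrFun h3 i
      exact Prod.ext h5 h4
    have hval := hLMI _ _ _ _ hne
    rw [stk_comp p.1] at hval
    exact hval
  obtain ⟨u0, hu0mem, hu0max⟩ :=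
    (isCompact_sphere (0 : ((Fin nx ⊕ (Fin N ⊕ Fin N)) → ℝ) × ℝ) 1).exists_isMaxOn
      ⟨(0, 1), by simp [mem_sphere_zero_iff_norm, Prod.norm_def]⟩
      ((bigQ_continuous nx N A B C D m1 m2 m3 P).continuousOn)
  set ε : ℝ := -Q u0 with hε
  have hu0norm : ‖u0‖ = 1 := mem_sphere_zero_iff_norm.mp hu0mem
  have hεpos : 0 < ε := by
    have hne : u0 ≠ 0 := by intro h; rw [h] at hu0norm; simp at hu0norm
    have := hQneg u0 hne
    simp only [hε]; linarith
  have hbound : ∀ p, Q p ≤ -ε * ‖p‖ ^ 2 := by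
    intro p
    by_cases hp : p = 0
    · subst hp
      have h0 : Q (0 : ((Fin nx ⊕ (Fin N ⊕ Fin N)) → ℝ) × ℝ) = 0 := by
        have := bigQ_smul nx N A B C D m1 m2 m3 P 0 0
        simpa using this
      simp [h0]
    · have hn : 0 < ‖p‖ := norm_pos_iff.mpr hp
      set u := ‖p‖⁻¹ • p with hu
      have hunorm : ‖u‖ = 1 := by
        rw [hu, norm_smul, norm_inv, norm_norm, inv_mul_cancel₀ hn.ne']
      have humem : u ∈ Metric.sphere (0 : ((Fin nx ⊕ (Fin N ⊕ Fin N)) → ℝ) × ℝ) 1 :=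
        mem_sphere_zero_iff_norm.mpr hunorm
      have h1 : Q u ≤ -ε := by simpa [hε] using hu0max humem
      have h2 : p = ‖p‖ • u := by rw [hu, smul_smul, mul_inv_cancel₀ hn.ne', one_smul]
      calc Q p = Q (‖p‖ • u) := by rw [← h2]
        _ = ‖p‖ ^ 2 * Q u := bigQ_smul nx N A B C D m1 m2 m3 P _ _
        _ ≤ ‖p‖ ^ 2 * (-ε) := mul_le_mul_of_nonneg_left h1 (sq_nonneg _)
        _ = -ε * ‖p‖ ^ 2 := by ring
  set ξ : ℕ → (Fin nx ⊕ (Fin N ⊕ Fin N)) → ℝ := fun k =>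
    stk (x k) (fun i => v (k - 1 - (i : ℕ))) (fun i => w (k - 1 - (i : ℕ))) with hξ
  set pfun : ℕ → ((Fin nx ⊕ (Fin N ⊕ Fin N)) → ℝ) × ℝ := fun k => (ξ k, w k) with hpfun
  set L : ℕ → ℝ := fun k => ξ k ⬝ᵥ P.mulVec (ξ k) with hL
  set rho : ℕ → (Fin (N+1) ⊕ Fin (N+1)) → ℝ := fun k =>
    Sum.elim (fun i : Fin (N+1) => v (k - (i : ℕ))) (fun i : Fin (N+1) => w (k - (i : ℕ)))
    with hrho
  have hLnonneg : ∀ k, 0 ≤ L k := by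
    intro k
    have := hP.dotProduct_mulVec_nonneg (ξ k)
    simpa [hL] using this
  have hxi_succ : ∀ k, ξ (k + 1) = stk (A.mulVec (x k) + w k • B)
      (shiftIn (v k) (fun i : Fin N => v (k - 1 - (i : ℕ))))
      (shiftIn (w k) (fun i : Fin N => w (k - 1 - (i : ℕ)))) := by
    intro k
    simp only [hξ]
    rw [hdyn k, shift_reg v k, shift_reg w k]
  have hQtraj : ∀ k, Q (pfun k)
      = L (k + 1) - L k + rho k ⬝ᵥ (reluIQC N m1 m2 m3).mulVec (rho k) := by
    intro k
    rw [hQdef]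
    unfold bigQ
    have c1 : (fun i => (pfun k).1 (Sum.inl i)) = x k := rfl
    have c2 : (fun i => (pfun k).1 (Sum.inr (Sum.inl i)))
        = fun i : Fin N => v (k - 1 - (i : ℕ)) := rfl
    have c3 : (fun i => (pfun k).1 (Sum.inr (Sum.inr i)))
        = fun i : Fin N => w (k - 1 - (i : ℕ)) := rfl
    have c4 : (pfun k).2 = w k := rfl
    rw [c1, c2, c3, c4, ← hout k, head_reg v k, head_reg w k]
    have e : stk (A.mulVec (x k) + w k • B)
        (shiftIn (v k) (fun i : Fin N => v (k - 1 - (i : ℕ))))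
        (shiftIn (w k) (fun i : Fin N => w (k - 1 - (i : ℕ)))) = ξ (k + 1) :=
      (hxi_succ k).symm
    rw [e]
  have hsum_nonneg : ∀ k, 0 ≤ rho k ⬝ᵥ (reluIQC N m1 m2 m3).mulVec (rho k) := by
    intro k
    exact iqc_nonneg m1 m2 m3 hm1 hm2 hm3 _ _ (fun i => hrelu (k - (i : ℕ)))
  have hdec : ∀ k, ε * ‖pfun k‖ ^ 2 ≤ L k - L (k + 1) := by
    intro k
    have h1 : Q (pfun k) ≤ -ε * ‖pfun k‖ ^ 2 := hbound _
    have h2 := hQtraj k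
    have h3 := hsum_nonneg k
    linarith
  have hpartial : ∀ K, ∑ k ∈ Finset.range K, ε * ‖pfun k‖ ^ 2 ≤ L 0 := by
    intro K
    calc ∑ k ∈ Finset.range K, ε * ‖pfun k‖ ^ 2
        ≤ ∑ k ∈ Finset.range K, (L k - L (k + 1)) :=
          Finset.sum_le_sum fun k _ => hdec k
      _ = L 0 - L K := Finset.sum_range_sub' L K
      _ ≤ L 0 := by linarith [hLnonneg K]
  have hsummable : Summable (fun k => ε * ‖pfun k‖ ^ 2) :=
    summable_of_sum_range_le (fun k => by positivity) hpartial
  have h0 : Filter.Tendsto (fun k => ε * ‖pfun k‖ ^ 2) Filter.atTop (nhds 0) :=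
    hsummable.tendsto_atTop_zero
  have h1 : Filter.Tendsto (fun k => ‖pfun k‖ ^ 2) Filter.atTop (nhds 0) := by
    have heq : (fun k => ‖pfun k‖ ^ 2) = fun k => ε⁻¹ * (ε * ‖pfun k‖ ^ 2) := by
      funext k; field_simp
    rw [heq]
    simpa using h0.const_mul ε⁻¹
  have h2 : Filter.Tendsto (fun k => ‖pfun k‖) Filter.atTop (nhds 0) := by
    have hs := h1.sqrt
    simpa [Real.sqrt_sq (norm_nonneg _)] using hs
  rw [tendsto_pi_nhds]
  intro i
  have hb : ∀ k, ‖x k i‖ ≤ ‖pfun k‖ := by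
    intro k
    have e : x k i = (pfun k).1 (Sum.inl i) := rfl
    rw [e]
    calc ‖(pfun k).1 (Sum.inl i)‖ ≤ ‖(pfun k).1‖ := norm_le_pi_norm _ _
      _ ≤ ‖pfun k‖ := norm_fst_le _
  have := squeeze_zero_norm hb h2
  simpa using this
end

section
/- Let n, m ∈ ℕ, Â ∈ ℝ^{n×n}, B̂ ∈ ℝ^{n}, Ĉ ∈ ℝ^{m×n}, D̂ ∈ ℝ^{m}, let M ∈ ℝ^{m×m} be symmetric, and let P ∈ ℝ^{n×n} be symmetric positive semidefinite. Suppose that for every (ξ, ω) ∈ ℝ^n × ℝ with (ξ, ω) ≠ 0, (Â ξ + B̂ ω)ᵀ P (Â ξ + B̂ ω) − ξᵀ P ξ + (Ĉ ξ + D̂ ω)ᵀ M (Ĉ ξ + D̂ ω) < 0. Then for all sequences x̂ : ℕ → ℝ^n and w : ℕ → ℝ satisfying x̂(k+1) = Â x̂(k) + B̂ w(k) for all k, and such that r(k) := Ĉ x̂(k) + D̂ w(k) satisfies ∑_{k=0}^{T₀} r(k)ᵀ M r(k) ≥ 0 for every T₀ ∈ ℕ, it holds that ∑_{k=0}^{∞}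 ‖x̂(k)‖² < ∞ and x̂(k) → 0 as k → ∞. -/
open Matrix

theorem stmt13 (n m : ℕ)
    (Ahat : Matrix (Fin n) (Fin n) ℝ) (Bhat : Fin n → ℝ)
    (Chat : Matrix (Fin m) (Fin n) ℝ) (Dhat : Fin m → ℝ)
    (M : Matrix (Fin m) (Fin m) ℝ) (hM : M.IsSymm)
    (P : Matrix (Fin n) (Fin n) ℝ) (hP : P.PosSemidef)
    (hLMI : ∀ (ξ : Fin n → ℝ) (ω : ℝ), ¬(ξ = 0 ∧ ω = 0) →
      (Ahat.mulVec ξ + ω • Bhat) ⬝ᵥ P.mulVec (Ahat.mulVec ξ + ω • Bhat)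
        - ξ ⬝ᵥ P.mulVec ξ
        + (Chat.mulVec ξ + ω • Dhat) ⬝ᵥ M.mulVec (Chat.mulVec ξ + ω • Dhat) < 0)
    (xhat : ℕ → Fin n → ℝ) (w : ℕ → ℝ)
    (hdyn : ∀ k, xhat (k + 1) = Ahat.mulVec (xhat k) + w k • Bhat)
    (hIQC : ∀ T₀ : ℕ, 0 ≤ ∑ k ∈ Finset.range (T₀ + 1),
      (Chat.mulVec (xhat k) + w k • Dhat) ⬝ᵥ
        M.mulVec (Chat.mulVec (xhat k) + w k • Dhat)) :
    (Summable fun k => ∑ i, (xhat k i) ^ 2) ∧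
      Filter.Tendsto xhat Filter.atTop (nhds 0) := by
  classical
  set Q : (Fin n → ℝ) × ℝ → ℝ := fun z =>
    (Ahat.mulVec z.1 + z.2 • Bhat) ⬝ᵥ P.mulVec (Ahat.mulVec z.1 + z.2 • Bhat)
      - z.1 ⬝ᵥ P.mulVec z.1
      + (Chat.mulVec z.1 + z.2 • Dhat) ⬝ᵥ M.mulVec (Chat.mulVec z.1 + z.2 • Dhat)
    with hQdef
  set S : (Fin n → ℝ) × ℝ → ℝ := fun z => (∑ i, z.1 i ^ 2) + z.2 ^ 2 with hSdef
  -- homogeneity of Q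
  have hhomQ : ∀ (c : ℝ) (z : (Fin n → ℝ) × ℝ), Q (c • z) = c ^ 2 * Q z := by
    intro c z
    have h1 : c • Ahat.mulVec z.1 + (c * z.2) • Bhat
        = c • (Ahat.mulVec z.1 + z.2 • Bhat) := by
      rw [smul_add, smul_smul]
    have h2 : c • Chat.mulVec z.1 + (c * z.2) • Dhat
        = c • (Chat.mulVec z.1 + z.2 • Dhat) := by
      rw [smul_add, smul_smul]
    simp only [hQdef, Prod.smul_fst, Prod.smul_snd, smul_eq_mul, h1, h2,
      Matrix.mulVec_smul, smul_dotProduct, dotProduct_smul, smul_eq_mul]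
    ring
  have hhomS : ∀ (c : ℝ) (z : (Fin n → ℝ) × ℝ), S (c • z) = c ^ 2 * S z := by
    intro c z
    simp only [hSdef, Prod.smul_fst, Prod.smul_snd, Pi.smul_apply, smul_eq_mul,
      mul_pow, ← Finset.mul_sum]
    ring
  -- nonnegativity and positivity of S
  have hSnn : ∀ z, 0 ≤ S z := fun z =>
    add_nonneg (Finset.sum_nonneg fun i _ => sq_nonneg _) (sq_nonneg _)
  have hSpos : ∀ z : (Fin n → ℝ) × ℝ, ¬(z.1 = 0 ∧ z.2 = 0) → 0 < S z := by
    intro z hz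
    rcases lt_or_eq_of_le (hSnn z) with h | h
    · exact h
    · exfalso
      apply hz
      have h0 : (∑ i, z.1 i ^ 2) + z.2 ^ 2 = 0 := by
        simp only [hSdef] at h; linarith
      have hsumnn : (0:ℝ) ≤ ∑ i, z.1 i ^ 2 :=
        Finset.sum_nonneg fun i _ => sq_nonneg _
      have hsum0 : ∑ i, z.1 i ^ 2 = 0 := by nlinarith [sq_nonneg z.2]
      constructor
      · funext i
        have hi : z.1 i ^ 2 = 0 := (Finset.sum_eq_zero_iff_of_nonneg
          (fun i _ => sq_nonneg (z.1 i))).1 hsum0 i (Finset.mem_univ i)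
        simpa using pow_eq_zero_iff (n := 2) (by norm_num) |>.1 hi
      · have h1 : z.2 ^ 2 = 0 := by nlinarith
        exact pow_eq_zero_iff (n := 2) (by norm_num) |>.1 h1
  -- continuity
  have hQcont : Continuous Q := by
    simp only [hQdef, Matrix.mulVec, dotProduct, Pi.add_apply, Pi.smul_apply,
      smul_eq_mul]
    fun_prop
  -- the compact "sphere"
  set K : Set ((Fin n → ℝ) × ℝ) := {z | S z = 1} with hKdef
  have hScont : Continuous S := by fun_prop
  have hKclosed : IsClosed K := isClosed_eq hScont continuous_const
  have hKbdd : Bornology.IsBounded K := by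
    rw [Metric.isBounded_iff_subset_closedBall 0]
    refine ⟨1, fun z hz => ?_⟩
    have hz1 : (∑ i, z.1 i ^ 2) + z.2 ^ 2 = 1 := by
      have : S z = 1 := hz
      simpa [hSdef] using this
    have hsumnn : (0:ℝ) ≤ ∑ i, z.1 i ^ 2 :=
      Finset.sum_nonneg fun i _ => sq_nonneg _
    have hterm : ∀ i, z.1 i ^ 2 ≤ 1 := by
      intro i
      have h : z.1 i ^ 2 ≤ ∑ j, z.1 j ^ 2 :=
        Finset.single_le_sum (fun j _ => sq_nonneg (z.1 j)) (Finset.mem_univ i)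
      nlinarith [sq_nonneg z.2]
    have hw : z.2 ^ 2 ≤ 1 := by nlinarith
    simp only [Metric.mem_closedBall, dist_zero_right, Prod.norm_def, max_le_iff]
    constructor
    · exact (pi_norm_le_iff_of_nonneg zero_le_one).2 fun i => by
        rw [Real.norm_eq_abs, abs_le]
        constructor <;> nlinarith [hterm i]
    · rw [Real.norm_eq_abs, abs_le]
      constructor <;> nlinarith
  have hKcompact : IsCompact K := Metric.isCompact_of_isClosed_isBounded hKclosed hKbdd
  have hKne : K.Nonempty := ⟨(0, 1), by simp [hKdef, hSdef]⟩
  obtain ⟨z₀, hz₀K, hz₀max⟩ := hKcompact.exists_isMaxOn hKne hQcont.continuousOn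
  -- ε
  set ε : ℝ := -Q z₀ with hεdef
  have hz₀ne : ¬(z₀.1 = 0 ∧ z₀.2 = 0) := by
    intro h
    have : S z₀ = 1 := hz₀K
    rw [hSdef] at this
    simp [h.1, h.2] at this
  have hεpos : 0 < ε := by
    have := hLMI z₀.1 z₀.2 hz₀ne
    simp only [hεdef, hQdef]
    linarith
  -- key quadratic bound
  have hkey : ∀ z : (Fin n → ℝ) × ℝ, Q z ≤ -ε * S z := by
    intro z
    by_cases hz : z.1 = 0 ∧ z.2 = 0
    · have hz0 : z = 0 := Prod.ext hz.1 hz.2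
      have hQ0 : Q z = 0 := by
        have := hhomQ 0 z
        simpa [hz0] using this
      have hS0 : S z = 0 := by
        have := hhomS 0 z
        simpa [hz0] using this
      rw [hQ0, hS0]; norm_num
    · have hS : 0 < S z := hSpos z hz
      set c : ℝ := (Real.sqrt (S z))⁻¹ with hcdef
      have hsq : Real.sqrt (S z) ^ 2 = S z := Real.sq_sqrt hS.le
      have hsqpos : 0 < Real.sqrt (S z) := Real.sqrt_pos.2 hS
      have hc2 : c ^ 2 * S z = 1 := by
        rw [hcdef, inv_pow, hsq]
        field_simp
      have hmem : c • z ∈ K := by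
        show S (c • z) = 1
        rw [hhomS]; exact hc2
      have := hz₀max hmem
      have hQle : Q (c • z) ≤ -ε := by simpa [hεdef] using this
      rw [hhomQ] at hQle
      have hc2pos : 0 < c ^ 2 := by positivity
      nlinarith
  -- Lyapunov function
  set V : ℕ → ℝ := fun k => xhat k ⬝ᵥ P.mulVec (xhat k) with hVdef
  have hVnn : ∀ k, 0 ≤ V k := by
    intro k
    have := hP.dotProduct_mulVec_nonneg (xhat k)
    simpa using this
  set r : ℕ → ℝ := fun k =>
    (Chat.mulVec (xhat k) + w k • Dhat) ⬝ᵥ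
      M.mulVec (Chat.mulVec (xhat k) + w k • Dhat) with hrdef
  have hstep : ∀ k, V (k + 1) - V k + r k + ε * S (xhat k, w k) ≤ 0 := by
    intro k
    have hQk : Q (xhat k, w k) = V (k + 1) - V k + r k := by
      simp only [hQdef, hVdef, hrdef, hdyn k]
    have := hkey (xhat k, w k)
    rw [hQk] at this
    linarith
  -- partial sum bound
  have hpartial : ∀ T : ℕ, ε * ∑ k ∈ Finset.range (T + 1), S (xhat k, w k) ≤ V 0 := by
    intro T
    have htel : ∑ k ∈ Finset.range (T + 1), (V (k + 1) - V k) = V (T + 1) - V 0 :=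
      Finset.sum_range_sub V (T + 1)
    have hsum : ∑ k ∈ Finset.range (T + 1),
        (V (k + 1) - V k + r k + ε * S (xhat k, w k)) ≤ 0 :=
      Finset.sum_nonpos fun k _ => hstep k
    rw [Finset.sum_add_distrib, Finset.sum_add_distrib, htel, ← Finset.mul_sum] at hsum
    have := hIQC T
    have := hVnn (T + 1)
    simp only [hrdef] at hsum ⊢
    linarith [hIQC T]
  -- summability
  have hfnn : ∀ k, 0 ≤ ∑ i, (xhat k i) ^ 2 :=
    fun k => Finset.sum_nonneg fun i _ => sq_nonneg _
  have hsummable : Summable fun k => ∑ i, (xhat k i) ^ 2 := by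
    apply summable_of_sum_range_le hfnn (c := V 0 / ε)
    intro T
    rcases T with _ | T
    · simp only [Finset.range_zero, Finset.sum_empty]
      exact div_nonneg (hVnn 0) hεpos.le
    · have h1 : ∑ k ∈ Finset.range (T + 1), ∑ i, (xhat k i) ^ 2
          ≤ ∑ k ∈ Finset.range (T + 1), S (xhat k, w k) := by
        apply Finset.sum_le_sum
        intro k _
        simp only [hSdef]
        nlinarith [sq_nonneg (w k)]
      have h2 : ∑ k ∈ Finset.range (T + 1), S (xhat k, w k) ≤ V 0 / ε :=
        (le_div_iff₀' hεpos).2 (hpartial T)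
      exact h1.trans h2
  refine ⟨hsummable, ?_⟩
  -- convergence to zero
  have htot : Filter.Tendsto (fun k => ∑ i, (xhat k i) ^ 2) Filter.atTop (nhds 0) :=
    hsummable.tendsto_atTop_zero
  rw [tendsto_pi_nhds]
  intro i
  have hsq : Filter.Tendsto (fun k => (xhat k i) ^ 2) Filter.atTop (nhds 0) := by
    apply tendsto_of_tendsto_of_tendsto_of_le_of_le tendsto_const_nhds htot
    · intro k; exact sq_nonneg _
    · intro k
      exact Finset.single_le_sum (f := fun i => (xhat k i) ^ 2)
        (fun i _ => sq_nonneg _) (Finset.mem_univ i)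
  have habs : Filter.Tendsto (fun k => |xhat k i|) Filter.atTop (nhds 0) := by
    have h := (Real.continuous_sqrt.tendsto 0).comp hsq
    simp only [Function.comp_def, Real.sqrt_sq_eq_abs, Real.sqrt_zero] at h
    exact h
  have hneg : Filter.Tendsto (fun k => -|xhat k i|) Filter.atTop (nhds 0) := by
    have := habs.neg
    rwa [neg_zero] at this
  have : Filter.Tendsto (fun k => xhat k i) Filter.atTop (nhds 0) := by
    apply tendsto_of_tendsto_of_tendsto_of_le_of_le hneg habs
    · intro k; exact neg_abs_le _
    · intro k; exact le_abs_self _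
  simpa using this
end

section
/- Let n, m ∈ ℕ, Â ∈ ℝ^{n×n}, B̂ ∈ ℝ^{n}, Ĉ ∈ ℝ^{m×n}, D̂ ∈ ℝ^{m}, let M ∈ ℝ^{m×m} be symmetric, let P̂ ∈ ℝ^{n×n} be symmetric positive definite, and let ε > 0 be such that for all (ξ, ω) ∈ ℝ^n × ℝ: (Â ξ + B̂ ω)ᵀ P̂ (Â ξ + B̂ ω) − ξᵀ P̂ ξ + ε ξᵀ ξ + (Ĉ ξ + D̂ ω)ᵀ M (Ĉ ξ + D̂ ω) ≤ 0. Then for all sequences x̂ : ℕ → ℝ^n and w : ℕ → ℝ with x̂(k+1) = Â x̂(k) + B̂ w(k) for all k, and such that r(k) := Ĉ x̂(k) + D̂ w(k) satisfies ∑_{k=0}^{T₀} r(k)ᵀ M r(k) ≥ 0 for every T₀ ∈ ℕ, the bound ε ∑_{k=0}^{T₀} ‖x̂(k)‖² ≤ x̂(0)ᵀ P̂ x̂(0) holds for every T₀ ∈ ℕ. -/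
open Matrix

theorem stmt15 (n m : ℕ)
    (Ahat : Matrix (Fin n) (Fin n) ℝ) (Bhat : Fin n → ℝ)
    (Chat : Matrix (Fin m) (Fin n) ℝ) (Dhat : Fin m → ℝ)
    (M : Matrix (Fin m) (Fin m) ℝ) (hM : M.IsSymm)
    (Phat : Matrix (Fin n) (Fin n) ℝ) (hPhat : Phat.PosDef)
    (ε : ℝ) (hε : 0 < ε)
    (hdiss : ∀ (ξ : Fin n → ℝ) (ω : ℝ),
      (Ahat.mulVec ξ + ω • Bhat) ⬝ᵥ Phat.mulVec (Ahat.mulVec ξ + ω • Bhat)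
        - ξ ⬝ᵥ Phat.mulVec ξ + ε * (ξ ⬝ᵥ ξ)
        + (Chat.mulVec ξ + ω • Dhat) ⬝ᵥ M.mulVec (Chat.mulVec ξ + ω • Dhat) ≤ 0)
    (xhat : ℕ → Fin n → ℝ) (w : ℕ → ℝ)
    (hdyn : ∀ k, xhat (k + 1) = Ahat.mulVec (xhat k) + w k • Bhat)
    (hIQC : ∀ T₀ : ℕ, 0 ≤ ∑ k ∈ Finset.range (T₀ + 1),
      (Chat.mulVec (xhat k) + w k • Dhat) ⬝ᵥ
        M.mulVec (Chat.mulVec (xhat k) + w k • Dhat)) :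
    ∀ T₀ : ℕ, ε * ∑ k ∈ Finset.range (T₀ + 1), ∑ i, (xhat k i) ^ 2
      ≤ xhat 0 ⬝ᵥ Phat.mulVec (xhat 0) := by
  intro T₀
  set V : ℕ → ℝ := fun k => xhat k ⬝ᵥ Phat.mulVec (xhat k) with hV
  set R : ℕ → ℝ := fun k =>
    (Chat.mulVec (xhat k) + w k • Dhat) ⬝ᵥ
      M.mulVec (Chat.mulVec (xhat k) + w k • Dhat) with hR
  have hstep : ∀ k, V (k+1) - V k + ε * (xhat k ⬝ᵥ xhat k) + R k ≤ 0 := by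
    intro k
    have := hdiss (xhat k) (w k)
    rw [← hdyn k] at this
    simpa [hV, hR] using this
  have hsum : ∀ T : ℕ,
      V (T+1) - V 0 + ε * (∑ k ∈ Finset.range (T+1), xhat k ⬝ᵥ xhat k)
        + ∑ k ∈ Finset.range (T+1), R k ≤ 0 := by
    intro T
    have htel : ∑ k ∈ Finset.range (T+1), (V (k+1) - V k) = V (T+1) - V 0 :=
      Finset.sum_range_sub V (T+1)
    calc V (T+1) - V 0 + ε * (∑ k ∈ Finset.range (T+1), xhat k ⬝ᵥ xhat k)
          + ∑ k ∈ Finset.range (T+1), R k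
        = ∑ k ∈ Finset.range (T+1),
            (V (k+1) - V k + ε * (xhat k ⬝ᵥ xhat k) + R k) := by
          rw [Finset.sum_add_distrib, Finset.sum_add_distrib, htel, Finset.mul_sum]
      _ ≤ 0 := Finset.sum_nonpos fun k _ => hstep k
  have hVpos : 0 ≤ V (T₀+1) := by
    rcases eq_or_ne (xhat (T₀+1)) 0 with h | h
    · simp [hV, h]
    · exact le_of_lt (by simpa [hV] using hPhat.dotProduct_mulVec_pos h)
  have hRsum : 0 ≤ ∑ k ∈ Finset.range (T₀+1), R k := hIQC T₀
  have key := hsum T₀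
  have heq : ∀ k, xhat k ⬝ᵥ xhat k = ∑ i, (xhat k i) ^ 2 := by
    intro k; simp [dotProduct, sq]
  simp only [heq] at key
  linarith
end
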